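/- Let 0 ≤ γ < π, let η be admissible with E_{η;γ} continuous on ℝ, let c > 0 and μ ∈ ℝ be constants, and set g := E_{η;γ} ∗ a. Define, for continuously differentiable 2π-periodic ψ, the operators (A_p ψ)(α) = −i c ψ′(α) − μ ψ(α) (the quantised angular momentum) and (A_a ψ)(α) = g(α) ψ(α) (the angle operator). Then for every continuously differentiable 2π-periodic ψ and every α ∈ ℝ with α ∉ 2πℤ, the commutator satisfies ([A_p, A_a]ψ)(α) = (A_p(A_a ψ) − A_a(A_p ψ))(α) = −i c (1 − 2π E_{η;γ}(α)) ψ(α). -/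

import Mathlib

open Real MeasureTheory

/-- The admissibility constant `c_η = (2π/κ) ∫_{γ−π}^{γ} |η(q)|²/sin(γ−q) dq`. -/
noncomputable def cEta (κ γ : ℝ) (η : ℝ → ℂ) : ℝ :=
  2 * π / κ * ∫ q in (γ - π)..γ, ‖η q‖ ^ 2 / Real.sin (γ - q)

/-- The 2π-periodic function `E_{η;γ}(α) = (2π/(κ c_η)) |η(α)|²/sin(γ−α)`. -/
noncomputable def Efun (κ γ : ℝ) (η : ℝ → ℂ) (α : ℝ) : ℝ :=
  2 * π / (κ * cEta κ γ η) * ‖η α‖ ^ 2 / Real.sin (γ - α)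

/-- The 2π-periodic sawtooth (angle) function `a(α) = α` for `α ∈ [0, 2π)`. -/
noncomputable def saw (α : ℝ) : ℝ := α - 2 * π * (⌊α / (2 * π)⌋ : ℝ)

/-- The periodic convolution `g = E_{η;γ} ∗ a`. -/
noncomputable def convEa (κ γ : ℝ) (η : ℝ → ℂ) (α : ℝ) : ℝ :=
  ∫ q in (0:ℝ)..(2 * π), Efun κ γ η (α - q) * saw q

/-- The quantised angular momentum `(A_p ψ)(α) = −i c ψ′(α) − μ ψ(α)`. -/
noncomputable def Ap (c μ : ℝ) (ψ : ℝ → ℂ) (α : ℝ) : ℂ :=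
  -Complex.I * c * deriv ψ α - μ * ψ α

/-!
`A_p` is a first-order differential operator, so `[A_p, g]ψ = −i c g' ψ` for any differentiable
multiplier `g`, and everything reduces to `g' = 1 − 2π E` for `g = E ∗ a`. On `(α − 2π, α]` the
sawtooth is linear, so `g(α) = ∫_{α−2π}^{α} E(u) (α − u) du = α ∫_{α−2π}^{α} E − ∫_{α−2π}^{α} E(u) u du`.
The first integral is the integral of `E` over one period, which is `1` because `E` is normalised
on `(γ − π, γ)` and vanishes on `[γ, γ + π]`; differentiating the second one gives `2π E(α)`.
-/

theorem ap_mul_sub_mul_ap {c μ : ℝ} {g ψ : ℝ → ℂ} {g' : ℂ} {x : ℝ} (hg : HasDerivAt g g' x)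
    (hψ : DifferentiableAt ℝ ψ x) :
    Ap c μ (fun y => g y * ψ y) x - g x * Ap c μ ψ x = -Complex.I * c * g' * ψ x := by
  have hprod : HasDerivAt (fun y => g y * ψ y) (g' * ψ x + g x * deriv ψ x) x :=
    hg.mul hψ.hasDerivAt
  simp only [Ap, hprod.deriv]
  ring

theorem hasDerivAt_intervalIntegral_sub_const {E : Type*} [NormedAddCommGroup E]
    [NormedSpace ℝ E] [CompleteSpace E] {g : ℝ → E} (hg : Continuous g) (T x : ℝ) :
    HasDerivAt (fun y => ∫ u in (y - T)..y, g u) (g x - g (x - T)) x := by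
  have hsplit : (fun y => ∫ u in (y - T)..y, g u) =
      fun y => (∫ u in 0..y, g u) - ∫ u in 0..(y - T), g u :=
    funext fun y =>
      (intervalIntegral.integral_interval_sub_left (hg.intervalIntegrable _ _)
        (hg.intervalIntegrable _ _)).symm
  rw [hsplit]
  exact (hg.integral_hasStrictDerivAt 0 x).hasDerivAt.sub
    ((hg.integral_hasStrictDerivAt 0 (x - T)).hasDerivAt.comp_sub_const x T)

theorem Function.Periodic.hasDerivAt_integral_mul_sub {f : ℝ → ℝ} {T : ℝ}
    (hper : Function.Periodic f T) (hf : Continuous f) (x : ℝ) :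
    HasDerivAt (fun y => ∫ u in (y - T)..y, f u * (y - u)) ((∫ u in 0..T, f u) - T * f x) x := by
  have hfu : Continuous fun u => f u * u := hf.mul continuous_id
  have hsplit : (fun y => ∫ u in (y - T)..y, f u * (y - u)) =
      fun y => y * (∫ u in 0..T, f u) - ∫ u in (y - T)..y, f u * u := by
    funext y
    have hperiod := hper.intervalIntegral_add_eq (y - T) 0
    rw [sub_add_cancel, zero_add] at hperiod
    rw [← hperiod, mul_comm, ← intervalIntegral.integral_mul_const,
      ← intervalIntegral.integral_sub ((hf.intervalIntegrable _ _).mul_const y)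
        (hfu.intervalIntegrable _ _)]
    exact intervalIntegral.integral_congr fun u _ => by ring
  rw [hsplit]
  refine ((hasDerivAt_mul_const _).sub
    (hasDerivAt_intervalIntegral_sub_const hfu T x)).congr_deriv ?_
  rw [hper.sub_eq]
  ring

theorem saw_eq_self {y : ℝ} (h0 : 0 ≤ y) (h2π : y < 2 * π) : saw y = y := by
  have hfloor : ⌊y / (2 * π)⌋ = 0 := by
    rw [Int.floor_eq_zero_iff]
    exact ⟨by positivity, (div_lt_one (by positivity)).2 h2π⟩
  simp [saw, hfloor]

theorem integral_comp_sub_mul_saw (f : ℝ → ℝ) (x : ℝ) :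
    ∫ q in (0:ℝ)..(2 * π), f (x - q) * saw q = ∫ u in (x - 2 * π)..x, f u * (x - u) := by
  have hsub := intervalIntegral.integral_comp_sub_left (fun u => f u * saw (x - u)) x
    (a := 0) (b := 2 * π)
  simp only [sub_sub_cancel, sub_zero] at hsub
  have hle : x - 2 * π ≤ x := by linarith [pi_pos]
  rw [hsub, intervalIntegral.integral_of_le hle, intervalIntegral.integral_of_le hle]
  refine setIntegral_congr_fun measurableSet_Ioc fun u hu => ?_
  rw [saw_eq_self (by linarith [hu.2]) (by linarith [hu.1])]

section Efun

variable {κ γ : ℝ} {η : ℝ → ℂ}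

theorem efun_periodic (hper : Function.Periodic η (2 * π)) :
    Function.Periodic (Efun κ γ η) (2 * π) := by
  intro x
  simp only [Efun, hper x, show γ - (x + 2 * π) = γ - x - 2 * π by ring, Real.sin_sub_two_pi]

theorem efun_eq_zero_of_mem_Icc
    (hsupp : ∀ α ∈ Set.Ioo (γ - π) (γ + π), η α ≠ 0 → α ∈ Set.Ioo (γ - π) γ)
    {x : ℝ} (hx : x ∈ Set.Icc γ (γ + π)) : Efun κ γ η x = 0 := by
  rcases hx.2.eq_or_lt with rfl | hlt
  · simp [Efun, show γ - (γ + π) = -π by ring]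
  · have hηx : η x = 0 := by
      by_contra hne
      exact (hsupp x ⟨by linarith [pi_pos, hx.1], hlt⟩ hne).2.not_ge hx.1
    simp [Efun, hηx]

theorem integral_efun_eq_one (hpos : 0 < cEta κ γ η) :
    ∫ u in (γ - π)..γ, Efun κ γ η u = 1 := by
  calc ∫ u in (γ - π)..γ, Efun κ γ η u
      = ∫ u in (γ - π)..γ, 2 * π / (κ * cEta κ γ η) * (‖η u‖ ^ 2 / Real.sin (γ - u)) :=
        intervalIntegral.integral_congr fun u _ => mul_div_assoc _ _ _
    _ = 2 * π / (κ * cEta κ γ η) * ∫ u in (γ - π)..γ, ‖η u‖ ^ 2 / Real.sin (γ - u) :=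
        intervalIntegral.integral_const_mul _ _
    _ = (2 * π / κ * ∫ u in (γ - π)..γ, ‖η u‖ ^ 2 / Real.sin (γ - u)) / cEta κ γ η := by ring
    _ = 1 := div_self hpos.ne'

theorem integral_efun_period (hper : Function.Periodic η (2 * π))
    (hsupp : ∀ α ∈ Set.Ioo (γ - π) (γ + π), η α ≠ 0 → α ∈ Set.Ioo (γ - π) γ)
    (hpos : 0 < cEta κ γ η) (hEc : Continuous (Efun κ γ η)) :
    ∫ u in (0:ℝ)..(2 * π), Efun κ γ η u = 1 := by
  have hshift := (efun_periodic (κ := κ) (γ := γ) hper).intervalIntegral_add_eq 0 (γ - π)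
  rw [zero_add, show γ - π + 2 * π = γ + π by ring] at hshift
  have hvanish : ∫ u in γ..(γ + π), Efun κ γ η u = 0 := by
    rw [intervalIntegral.integral_congr (g := fun _ => 0) fun x hx =>
      efun_eq_zero_of_mem_Icc hsupp (by rwa [Set.uIcc_of_le (by linarith [pi_pos])] at hx)]
    simp
  rw [hshift, ← intervalIntegral.integral_add_adjacent_intervals (b := γ)
    (hEc.intervalIntegrable _ _) (hEc.intervalIntegrable _ _), integral_efun_eq_one hpos,
    hvanish, add_zero]

theorem hasDerivAt_convEa (hper : Function.Periodic η (2 * π))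
    (hsupp : ∀ α ∈ Set.Ioo (γ - π) (γ + π), η α ≠ 0 → α ∈ Set.Ioo (γ - π) γ)
    (hpos : 0 < cEta κ γ η) (hEc : Continuous (Efun κ γ η)) (x : ℝ) :
    HasDerivAt (convEa κ γ η) (1 - 2 * π * Efun κ γ η x) x := by
  have hconv : convEa κ γ η = fun y => ∫ u in (y - 2 * π)..y, Efun κ γ η u * (y - u) :=
    funext fun y => integral_comp_sub_mul_saw (Efun κ γ η) y
  have hderiv := (efun_periodic hper).hasDerivAt_integral_mul_sub hEc x
  rwa [integral_efun_period hper hsupp hpos hEc, ← hconv] at hderiv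

end Efun

theorem angle_momentum_commutator_general (κ γ : ℝ)
    (η : ℝ → ℂ) (hper : Function.Periodic η (2 * π))
    (hsupp : ∀ α ∈ Set.Ioo (γ - π) (γ + π), η α ≠ 0 → α ∈ Set.Ioo (γ - π) γ)
    (hpos : 0 < cEta κ γ η)
    (hEc : Continuous (Efun κ γ η))
    (c μ : ℝ)
    (ψ : ℝ → ℂ) (hψ : ContDiff ℝ 1 ψ)
    (α : ℝ) :
    Ap c μ (fun x => (convEa κ γ η x : ℂ) * ψ x) α -
        (convEa κ γ η α : ℂ) * Ap c μ ψ α =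
      -Complex.I * c * (1 - 2 * π * Efun κ γ η α) * ψ α := by
  have hconv := (hasDerivAt_convEa hper hsupp hpos hEc α).ofReal_comp
  rw [ap_mul_sub_mul_ap hconv (hψ.differentiable one_ne_zero α)]
  push_cast
  ring

/-- Commutation relation between the quantised angular momentum `A_p` and the angle
operator `A_a ψ = (E_{η;γ} ∗ a) ψ`: for C¹ 2π-periodic `ψ` and `α ∉ 2πℤ`,
`([A_p, A_a]ψ)(α) = −i c (1 − 2π E_{η;γ}(α)) ψ(α)`. -/
theorem angle_momentum_commutator (κ γ : ℝ) (hκ : 0 < κ) (hγ0 : 0 ≤ γ) (hγπ : γ < π)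
    (η : ℝ → ℂ) (hper : Function.Periodic η (2 * π))
    (hsupp : ∀ α ∈ Set.Ioo (γ - π) (γ + π), η α ≠ 0 → α ∈ Set.Ioo (γ - π) γ)
    (hint : IntervalIntegrable (fun q => ‖η q‖ ^ 2 / Real.sin (γ - q)) volume (γ - π) γ)
    (hpos : 0 < cEta κ γ η)
    (hEc : Continuous (Efun κ γ η))
    (c μ : ℝ) (hc : 0 < c)
    (ψ : ℝ → ℂ) (hψ : ContDiff ℝ 1 ψ) (hψper : Function.Periodic ψ (2 * π))
    (α : ℝ) (hα : ∀ k : ℤ, α ≠ 2 * π * k) :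
    Ap c μ (fun x => (convEa κ γ η x : ℂ) * ψ x) α -
        (convEa κ γ η α : ℂ) * Ap c μ ψ α =
      -Complex.I * c * (1 - 2 * π * Efun κ γ η α) * ψ α :=
  angle_momentum_commutator_general κ γ η hper hsupp hpos hEc c μ ψ hψ α
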